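/- arXiv:2103.01493 — 2 statements merged into one kernel-verified Lean document; each statement's English description precedes it below -/
import Mathlib

section
/- Given a left state (ρ₀, u₀) with ρ₀ > 0, u₀ ≠ 0, define ρ_m = ((γ−1)u₀²/(κγ(γ+1)) + 2ρ₀^{γ−1}/(γ+1))^{1/(γ−1)} and a_min = a₀ ρ₀ |u₀| / (√(κγ) ρ_m^{(γ+1)/2}). Then the function φ(ρ) = a₀ ρ₀ |u₀| / (ρ √(u(ρ)²)) where u(ρ) is determined by u(ρ)² = u₀² + (2κγ/(γ−1))(ρ₀^{γ−1} − ρ^{γ−1}), i.e. φ(ρ) = a₀ρ₀|u₀|/(ρ·√(u₀² + (2κγ/(γ−1))(ρ₀^{γ−1} − ρ^{γ−1}))), attains its minimum over the admissible interval at ρ = ρ_m, with minimum value a_min. -/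
/-- The cross-section function `φ(ρ) = a₀ρ₀|u₀| / (ρ √(u(ρ)²))` along the
Bernoulli curve attains its minimum at the sonic density `ρ_m`, with minimum
value `a_min`. -/
theorem stmt_3 (κ γ a₀ ρ₀ u₀ : ℝ) (hκ : 0 < κ) (hγ1 : 1 < γ) (hγ3 : γ < 3)
    (ha₀ : 0 < a₀) (hρ₀ : 0 < ρ₀) (hu₀ : u₀ ≠ 0)
    (ρm : ℝ)
    (hρm : ρm = ((γ - 1) * u₀ ^ 2 / (κ * γ * (γ + 1))
        + 2 * ρ₀ ^ (γ - 1) / (γ + 1)) ^ (1 / (γ - 1)))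
    (amin : ℝ)
    (hamin : amin = a₀ * ρ₀ * |u₀| / (Real.sqrt (κ * γ) * ρm ^ ((γ + 1) / 2)))
    (φ : ℝ → ℝ)
    (hφ : ∀ ρ : ℝ, φ ρ = a₀ * ρ₀ * |u₀| /
        (ρ * Real.sqrt (u₀ ^ 2 + (2 * κ * γ / (γ - 1)) * (ρ₀ ^ (γ - 1) - ρ ^ (γ - 1))))) :
    (∀ ρ : ℝ, 0 < ρ →
        0 < u₀ ^ 2 + (2 * κ * γ / (γ - 1)) * (ρ₀ ^ (γ - 1) - ρ ^ (γ - 1)) →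
        amin ≤ φ ρ) ∧ φ ρm = amin := by
  have hγ0 : (0:ℝ) < γ := by linarith
  have hg1 : (0:ℝ) < γ - 1 := by linarith
  have hg1' : γ - 1 ≠ 0 := ne_of_gt hg1
  have hgp1 : (0:ℝ) < γ + 1 := by linarith
  have hgp1' : γ + 1 ≠ 0 := ne_of_gt hgp1
  have hκγ : 0 < κ * γ := mul_pos hκ hγ0
  have hu2 : 0 < u₀ ^ 2 := by positivity
  have hρ₀p : 0 < ρ₀ ^ (γ - 1) := Real.rpow_pos_of_pos hρ₀ _
  have hE : 0 < (γ - 1) * u₀ ^ 2 / (κ * γ * (γ + 1)) + 2 * ρ₀ ^ (γ - 1) / (γ + 1) := by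
    have h1 : 0 ≤ (γ - 1) * u₀ ^ 2 / (κ * γ * (γ + 1)) :=
      div_nonneg (mul_nonneg hg1.le (sq_nonneg _)) (by positivity)
    have h2 : 0 < 2 * ρ₀ ^ (γ - 1) / (γ + 1) := by positivity
    linarith
  have hρm_pos : 0 < ρm := by rw [hρm]; exact Real.rpow_pos_of_pos hE _
  have hρm_pow : ρm ^ (γ - 1)
      = (γ - 1) * u₀ ^ 2 / (κ * γ * (γ + 1)) + 2 * ρ₀ ^ (γ - 1) / (γ + 1) := by
    rw [hρm, ← Real.rpow_natCast]
    rw [Real.rpow_natCast]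
    rw [← Real.rpow_mul hE.le, one_div_mul_cancel hg1', Real.rpow_one]
  -- AM-GM inequality
  have amgm : ∀ ρ : ℝ, 0 < ρ →
      ρm ^ (γ - 1) * ρ ^ 2
        ≤ (γ - 1) / (γ + 1) * ρm ^ (γ + 1) + 2 / (γ + 1) * ρ ^ (γ + 1) := by
    intro ρ hρ
    have h := Real.geom_mean_le_arith_mean2_weighted
      (w₁ := (γ - 1) / (γ + 1)) (w₂ := 2 / (γ + 1))
      (p₁ := ρm ^ (γ + 1)) (p₂ := ρ ^ (γ + 1))
      (by positivity) (by positivity)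
      (Real.rpow_nonneg hρm_pos.le _) (Real.rpow_nonneg hρ.le _)
      (by field_simp; ring)
    calc ρm ^ (γ - 1) * ρ ^ 2
        = (ρm ^ (γ + 1)) ^ ((γ - 1) / (γ + 1)) * (ρ ^ (γ + 1)) ^ (2 / (γ + 1)) := by
          rw [← Real.rpow_mul hρm_pos.le, ← Real.rpow_mul hρ.le,
            mul_div_cancel₀ _ hgp1', mul_div_cancel₀ _ hgp1',
            show (2:ℝ) = ((2:ℕ):ℝ) by norm_num, Real.rpow_natCast]
      _ ≤ _ := h
  -- main bound: ρ² D(ρ) ≤ κγ ρm^{γ+1}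
  have main : ∀ ρ : ℝ, 0 < ρ →
      ρ ^ 2 * (u₀ ^ 2 + (2 * κ * γ / (γ - 1)) * (ρ₀ ^ (γ - 1) - ρ ^ (γ - 1)))
        ≤ κ * γ * ρm ^ (γ + 1) := by
    intro ρ hρ
    have h1 := amgm ρ hρ
    have h2 : ρ ^ (γ - 1) * ρ ^ 2 = ρ ^ (γ + 1) := by
      rw [show (ρ:ℝ) ^ (2:ℕ) = ρ ^ ((2:ℕ):ℝ) by rw [Real.rpow_natCast],
        ← Real.rpow_add hρ]
      norm_num
      ring_nf
    have hB : u₀ ^ 2 + (2 * κ * γ / (γ - 1)) * ρ₀ ^ (γ - 1)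
        = κ * γ * (γ + 1) / (γ - 1) * ρm ^ (γ - 1) := by
      rw [hρm_pow]; field_simp
    have c1 : (0:ℝ) ≤ κ * γ * (γ + 1) / (γ - 1) := by positivity
    have h3 := mul_le_mul_of_nonneg_left h1 c1
    calc ρ ^ 2 * (u₀ ^ 2 + (2 * κ * γ / (γ - 1)) * (ρ₀ ^ (γ - 1) - ρ ^ (γ - 1)))
        = κ * γ * (γ + 1) / (γ - 1) * (ρm ^ (γ - 1) * ρ ^ 2)
            - (2 * κ * γ / (γ - 1)) * ρ ^ (γ + 1) := by
          linear_combination ρ ^ 2 * hB - (2 * κ * γ / (γ - 1)) * h2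
      _ ≤ κ * γ * (γ + 1) / (γ - 1)
            * ((γ - 1) / (γ + 1) * ρm ^ (γ + 1) + 2 / (γ + 1) * ρ ^ (γ + 1))
            - (2 * κ * γ / (γ - 1)) * ρ ^ (γ + 1) := by linarith
      _ = κ * γ * ρm ^ (γ + 1) := by field_simp; ring
  have habs : 0 < |u₀| := abs_pos.mpr hu₀
  have hK : 0 < a₀ * ρ₀ * |u₀| := by positivity
  have hX : Real.sqrt (κ * γ) * ρm ^ ((γ + 1) / 2)
      = Real.sqrt (κ * γ * ρm ^ (γ + 1)) := by
    rw [Real.sqrt_mul hκγ.le]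
    congr 1
    rw [Real.sqrt_eq_rpow, ← Real.rpow_mul hρm_pos.le]
    congr 1
    ring
  have hXpos : 0 < Real.sqrt (κ * γ) * ρm ^ ((γ + 1) / 2) := by
    have := Real.rpow_pos_of_pos hρm_pos ((γ + 1) / 2)
    have := Real.sqrt_pos.mpr hκγ
    positivity
  constructor
  · intro ρ hρ hD
    rw [hφ, hamin]
    set D := u₀ ^ 2 + (2 * κ * γ / (γ - 1)) * (ρ₀ ^ (γ - 1) - ρ ^ (γ - 1)) with hD_def
    have hy : 0 < ρ * Real.sqrt D := mul_pos hρ (Real.sqrt_pos.mpr hD)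
    have h1 : ρ * Real.sqrt D = Real.sqrt (ρ ^ 2 * D) := by
      rw [Real.sqrt_mul (by positivity), Real.sqrt_sq hρ.le]
    have hyX : ρ * Real.sqrt D ≤ Real.sqrt (κ * γ) * ρm ^ ((γ + 1) / 2) := by
      rw [hX, h1]
      exact Real.sqrt_le_sqrt (main ρ hρ)
    exact div_le_div_of_nonneg_left hK.le hy hyX
  · have hDm : u₀ ^ 2 + (2 * κ * γ / (γ - 1)) * (ρ₀ ^ (γ - 1) - ρm ^ (γ - 1))
        = κ * γ * ρm ^ (γ - 1) := by
      rw [hρm_pow]; field_simp; ring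
    rw [hφ, hamin, hDm]
    congr 1
    rw [Real.sqrt_mul hκγ.le, Real.sqrt_eq_rpow (ρm ^ (γ - 1)),
      ← Real.rpow_mul hρm_pos.le]
    rw [show (γ + 1) / 2 = 1 + (γ - 1) * (1 / 2) by ring,
      Real.rpow_add hρm_pos, Real.rpow_one]
    ring
end

section
/- Let γ > 1 and consider the smooth curve ρ₀ ↦ (p₁(ρ₀), u₁(ρ₀), ρ₁(ρ₀)) defined implicitly by the system: a₀ρ₀u_m = a₁ρ₁u₁, u_m²/2 + (γ/(γ−1))p_m/ρ₀ = u₁²/2 + (γ/(γ−1))p₁/ρ₁, and p_m/ρ₀^γ = p₁/ρ₁^γ (with fixed a₀, a₁, u_m, p_m > 0). Then along this curve, dp₁/dρ₀ = γ²p_m p₁(ρ₀^{γ−1} − ρ₁^{γ−1}) / ((γ−1)ρ₀^{γ+1}(u₁² − c₁²)), where c₁² = γp₁/ρ₁, at every point where u₁² ≠ c₁². -/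
/-!
Differentiating the mass, Bernoulli and entropy relations at `s₀` gives a linear system in
`(p', u', r')`. Eliminating `u'` with the mass relation and `r'` with the entropy relation leaves
`p' (γ - 1) s₀² (ρ₁ u₁² - γ p₁) = γ² p₁ (p_m ρ₁ - p₁ s₀)`, whose coefficient of `p'` is nonzero
exactly off the sonic line. The entropy relation `p_m ρ₁^γ = p₁ s₀^γ` then turns the right-hand
side into the stated power form.
-/

open Filter Topology

namespace StationaryWave

variable {P U R : ℝ → ℝ} {s₀ p' u' r' : ℝ}

lemma mass_deriv {a₀ a₁ um : ℝ} (ha₁ : a₁ ≠ 0)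
    (hmass : (fun s => a₀ * s * um) =ᶠ[𝓝 s₀] fun s => a₁ * R s * U s)
    (hU : HasDerivAt U u' s₀) (hR : HasDerivAt R r' s₀) :
    R s₀ * U s₀ = s₀ * (r' * U s₀ + R s₀ * u') := by
  have hlin : HasDerivAt (fun s => a₀ * s * um) (a₀ * um) s₀ := by
    simpa using ((hasDerivAt_id s₀).const_mul a₀).mul_const um
  have hd : a₀ * um = a₁ * (r' * U s₀ + R s₀ * u') := by
    have := (hmass.hasDerivAt_iff.mp hlin).unique ((hR.const_mul a₁).mul hU)
    linear_combination this
  have h₀ := hmass.eq_of_nhds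
  refine mul_left_cancel₀ ha₁ ?_
  linear_combination s₀ * hd - h₀

lemma entropy_deriv {γ pm : ℝ} (hs₀ : 0 < s₀) (hR₀ : 0 < R s₀)
    (hent : ∀ᶠ s in 𝓝 s₀, pm / s ^ γ = P s / R s ^ γ)
    (hP : HasDerivAt P p' s₀) (hR : HasDerivAt R r' s₀) :
    γ * P s₀ * s₀ * r' = p' * s₀ * R s₀ + γ * P s₀ * R s₀ := by
  have hRpos : ∀ᶠ s in 𝓝 s₀, 0 < R s := hR.continuousAt.eventually (lt_mem_nhds hR₀)
  have hprod : (fun s => pm * R s ^ γ) =ᶠ[𝓝 s₀] fun s => P s * s ^ γ := by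
    filter_upwards [hent, hRpos, lt_mem_nhds hs₀] with s hs hRs hs0
    exact (div_eq_div_iff (Real.rpow_pos_of_pos hs0 γ).ne'
      (Real.rpow_pos_of_pos hRs γ).ne').mp hs
  have hd : pm * (r' * γ * R s₀ ^ (γ - 1)) = p' * s₀ ^ γ + P s₀ * (γ * s₀ ^ (γ - 1)) :=
    (hprod.hasDerivAt_iff.mp ((hR.rpow_const (Or.inl hR₀.ne')).const_mul pm)).unique
      (hP.mul (Real.hasDerivAt_rpow_const (Or.inl hs₀.ne')))
  have h₀ := hprod.eq_of_nhds
  rw [Real.rpow_sub_one hR₀.ne', Real.rpow_sub_one hs₀.ne'] at hd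
  have hsγ : s₀ ^ γ ≠ 0 := (Real.rpow_pos_of_pos hs₀ γ).ne'
  field_simp at hd
  refine mul_left_cancel₀ hsγ ?_
  linear_combination hd - γ * s₀ * r' * h₀

lemma bernoulli_deriv {γ um pm : ℝ} (hγ : γ - 1 ≠ 0) (hs₀ : s₀ ≠ 0) (hR₀ : R s₀ ≠ 0)
    (hbern : (fun s => um ^ 2 / 2 + (γ / (γ - 1)) * pm / s)
      =ᶠ[𝓝 s₀] fun s => (U s) ^ 2 / 2 + (γ / (γ - 1)) * P s / R s)
    (hP : HasDerivAt P p' s₀) (hU : HasDerivAt U u' s₀) (hR : HasDerivAt R r' s₀) :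
    -(γ * pm * R s₀ ^ 2)
      = (γ - 1) * s₀ ^ 2 * R s₀ ^ 2 * U s₀ * u' + γ * s₀ ^ 2 * (p' * R s₀ - P s₀ * r') := by
  have hd := (hbern.hasDerivAt_iff.mp
      (((hasDerivAt_const s₀ (γ / (γ - 1) * pm)).div (hasDerivAt_id s₀) hs₀).const_add
        (um ^ 2 / 2))).unique
    (((hU.pow 2).div_const 2).add ((hP.const_mul (γ / (γ - 1))).div hR hR₀))
  simp only [id, Nat.cast_ofNat, Nat.add_one_sub_one, pow_one] at hd
  field_simp at hd
  linear_combination hd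

lemma pressure_deriv_mul_eq {γ pm s P U R p' u' r' : ℝ}
    (hmass : R * U = s * (r' * U + R * u'))
    (hent : γ * P * s * r' = p' * s * R + γ * P * R)
    (hbern : -(γ * pm * R ^ 2) = (γ - 1) * s ^ 2 * R ^ 2 * U * u' + γ * s ^ 2 * (p' * R - P * r')) :
    p' * ((γ - 1) * s ^ 2 * R * (R * U ^ 2 - γ * P)) = γ ^ 2 * P * R * (pm * R - P * s) := by
  linear_combination (-(γ * P * (γ - 1) * s * R * U)) * hmass
    + (-(s * ((γ - 1) * R * U ^ 2 + γ * P))) * hent + (γ * P) * hbern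

end StationaryWave

open StationaryWave

theorem stmt_16_general (γ a₀ a₁ um pm : ℝ) (hγ : 1 < γ) (ha₁ : 0 < a₁)
    (P U R : ℝ → ℝ) (s₀ : ℝ) (hs₀ : 0 < s₀)
    (hpos : ∀ s : ℝ, 0 < s → 0 < P s ∧ 0 < U s ∧ 0 < R s)
    (hmass : ∀ s : ℝ, 0 < s → a₀ * s * um = a₁ * R s * U s)
    (hbern : ∀ s : ℝ, 0 < s →
        um ^ 2 / 2 + (γ / (γ - 1)) * pm / s
          = (U s) ^ 2 / 2 + (γ / (γ - 1)) * P s / R s)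
    (hent : ∀ s : ℝ, 0 < s → pm / s ^ γ = P s / (R s) ^ γ)
    (p' u' r' : ℝ)
    (hP : HasDerivAt P p' s₀) (hU : HasDerivAt U u' s₀) (hR : HasDerivAt R r' s₀)
    (hnonsonic : (U s₀) ^ 2 ≠ γ * P s₀ / R s₀) :
    p' = γ ^ 2 * pm * P s₀ * (s₀ ^ (γ - 1) - (R s₀) ^ (γ - 1))
        / ((γ - 1) * s₀ ^ (γ + 1) * ((U s₀) ^ 2 - γ * P s₀ / R s₀)) := by
  have hR₀ : 0 < R s₀ := (hpos s₀ hs₀).2.2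
  have hγ₁ : γ - 1 ≠ 0 := sub_ne_zero.mpr hγ.ne'
  have near : ∀ᶠ s in 𝓝 s₀, 0 < s := lt_mem_nhds hs₀
  have key := pressure_deriv_mul_eq (pm := pm)
    (mass_deriv ha₁.ne' (near.mono hmass) hU hR)
    (entropy_deriv hs₀ hR₀ (near.mono hent) hP hR)
    (bernoulli_deriv hγ₁ hs₀.ne' hR₀.ne' (near.mono hbern) hP hU hR)
  have hpow : pm / s₀ ^ γ = P s₀ / R s₀ ^ γ := hent s₀ hs₀
  rw [Real.rpow_sub_one hs₀.ne', Real.rpow_sub_one hR₀.ne', Real.rpow_add_one hs₀.ne',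
    eq_div_iff_mul_eq (by have := sub_ne_zero.mpr hnonsonic; positivity)]
  field_simp at hpow ⊢
  refine mul_left_cancel₀ hR₀.ne' ?_
  linear_combination s₀ ^ γ * key + γ ^ 2 * P s₀ * s₀ * R s₀ * hpow

/-- Identity (3.9): along the family of stationary waves parametrized by the
left density `ρ₀` on a contact discontinuity,
`dp₁/dρ₀ = γ² p_m p₁ (ρ₀^{γ-1} - ρ₁^{γ-1}) / ((γ-1) ρ₀^{γ+1} (u₁² - c₁²))`. -/
theorem stmt_16 (γ a₀ a₁ um pm : ℝ) (hγ : 1 < γ)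
    (ha₀ : 0 < a₀) (ha₁ : 0 < a₁) (hum : 0 < um) (hpm : 0 < pm)
    (P U R : ℝ → ℝ) (s₀ : ℝ) (hs₀ : 0 < s₀)
    (hpos : ∀ s : ℝ, 0 < s → 0 < P s ∧ 0 < U s ∧ 0 < R s)
    (hmass : ∀ s : ℝ, 0 < s → a₀ * s * um = a₁ * R s * U s)
    (hbern : ∀ s : ℝ, 0 < s →
        um ^ 2 / 2 + (γ / (γ - 1)) * pm / s
          = (U s) ^ 2 / 2 + (γ / (γ - 1)) * P s / R s)
    (hent : ∀ s : ℝ, 0 < s → pm / s ^ γ = P s / (R s) ^ γ)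
    (p' u' r' : ℝ)
    (hP : HasDerivAt P p' s₀) (hU : HasDerivAt U u' s₀) (hR : HasDerivAt R r' s₀)
    (hnonsonic : (U s₀) ^ 2 ≠ γ * P s₀ / R s₀) :
    p' = γ ^ 2 * pm * P s₀ * (s₀ ^ (γ - 1) - (R s₀) ^ (γ - 1))
        / ((γ - 1) * s₀ ^ (γ + 1) * ((U s₀) ^ 2 - γ * P s₀ / R s₀)) :=
  stmt_16_general γ a₀ a₁ um pm hγ ha₁ P U R s₀ hs₀ hpos hmass hbern hent p' u' r' hP hU hR
    hnonsonic
end
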